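/- Let Γ be a coalgebra over a field k, let C be a finite-dimensional right Γ-comodule, and suppose that for an ascending chain of finite-dimensional subcoalgebras Γ_i with union Γ there are almost split sequences d_i : 0 → A_i → B_i → C → 0 in the category of Γ_i-comodules and morphisms d_i → d_{i+1} restricting to the identity on C. Then the connecting maps A_i → A_{i+1} and B_i → B_{i+1} are injective. -/

import Mathlib

open TensorProduct LinearMap

noncomputable section

universe u

section DualAlgebra

variable (k : Type u) [Field k]
variable (Γ : Type u) [AddCommGroup Γ] [Module k Γ] [Coalgebra k Γ]

/-- Convolution product on the dual algebra `D Γ = Hom_k(Γ, k)`: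
`(f * g)(γ) = Σ f(γ₍₁₎) g(γ₍₂₎)`. -/
def conv (f g : Module.Dual k Γ) : Module.Dual k Γ :=
  LinearMap.mul' k k ∘ₗ TensorProduct.map f g ∘ₗ Coalgebra.comul

/-- The right hit action `γ ↼ e = Σ e(γ₍₁₎) γ₍₂₎`, as a linear endomap of `Γ`. -/
def rhit (e : Module.Dual k Γ) : Γ →ₗ[k] Γ :=
  (TensorProduct.lid k Γ).toLinearMap ∘ₗ e.rTensor Γ ∘ₗ Coalgebra.comul

/-- The left hit action `e ⇀ γ = Σ γ₍₁₎ e(γ₍₂₎)`, as a linear endomap of `Γ`. -/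
def lhit (e : Module.Dual k Γ) : Γ →ₗ[k] Γ :=
  (TensorProduct.rid k Γ).toLinearMap ∘ₗ e.lTensor Γ ∘ₗ Coalgebra.comul

/-- A subspace `Λ ⊆ Γ` is a subcoalgebra if `Δ(Λ) ⊆ Λ ⊗ Λ`. -/
def IsSubcoalgebra (p : Submodule k Γ) : Prop :=
  ∀ x ∈ p, Coalgebra.comul (R := k) x ∈ LinearMap.range (TensorProduct.mapIncl p p)

end DualAlgebra

/-- A right `Γ`-comodule: a `k`-vector space with a coassociative counital coaction
`ρ : M → M ⊗ Γ`. -/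
structure RComod (k : Type u) [Field k] (Γ : Type u)
    [AddCommGroup Γ] [Module k Γ] [Coalgebra k Γ] where
  carrier : Type u
  [acg : AddCommGroup carrier]
  [mod : Module k carrier]
  coact : carrier →ₗ[k] carrier ⊗[k] Γ
  coassoc : (TensorProduct.assoc k carrier Γ Γ).toLinearMap ∘ₗ coact.rTensor Γ ∘ₗ coact
      = (Coalgebra.comul (R := k) (A := Γ)).lTensor carrier ∘ₗ coact
  counit_id : (TensorProduct.rid k carrier).toLinearMap ∘ₗ
      (Coalgebra.counit (R := k) (A := Γ)).lTensor carrier ∘ₗ coact = LinearMap.id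

attribute [instance] RComod.acg RComod.mod

variable {k : Type u} [Field k] {Γ : Type u} [AddCommGroup Γ] [Module k Γ] [Coalgebra k Γ]

/-- A morphism of right `Γ`-comodules. -/
@[ext] structure RComodHom (M N : RComod k Γ) where
  toFun : M.carrier →ₗ[k] N.carrier
  comm : N.coact ∘ₗ toFun = toFun.rTensor Γ ∘ₗ M.coact

/-- The identity comodule morphism. -/
def RComodHom.id (M : RComod k Γ) : RComodHom M M :=
  ⟨LinearMap.id, by simp⟩

/-- Composition of comodule morphisms. -/
def RComodHom.comp {M N P : RComod k Γ} (f : RComodHom N P) (g : RComodHom M N) :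
    RComodHom M P :=
  ⟨f.toFun ∘ₗ g.toFun, by
    ext x
    have hf := LinearMap.congr_fun f.comm (g.toFun x)
    have hg := LinearMap.congr_fun g.comm x
    simp only [LinearMap.comp_apply] at hf hg ⊢
    rw [hf, hg, ← LinearMap.comp_apply, ← LinearMap.rTensor_comp]⟩

/-- `g : B → C` is a split epimorphism of comodules. -/
def IsSplitEpi {B C : RComod k Γ} (g : RComodHom B C) : Prop :=
  ∃ s : RComodHom C B, g.comp s = RComodHom.id C

/-- `f : A → B` is a split monomorphism of comodules. -/
def IsSplitMono {A B : RComod k Γ} (f : RComodHom A B) : Prop :=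
  ∃ r : RComodHom B A, r.comp f = RComodHom.id A

/-- `0 → A →f B →g C → 0` is a short exact sequence of comodules. -/
structure IsExactSeq {A B C : RComod k Γ} (f : RComodHom A B) (g : RComodHom B C) : Prop where
  inj : Function.Injective f.toFun
  surj : Function.Surjective g.toFun
  exact : LinearMap.range f.toFun = LinearMap.ker g.toFun

/-- A comodule is indecomposable iff it is nonzero and its only idempotent
endomorphisms are `0` and the identity. -/
def Indecomposable (M : RComod k Γ) : Prop :=
  Nontrivial M.carrier ∧
    ∀ e : RComodHom M M, e.comp e = e → e = RComodHom.id M ∨ e.toFun = 0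

/-- The space of comodule morphisms `M → N`, as a subspace of the linear maps. -/
def homSubmodule (M N : RComod k Γ) : Submodule k (M.carrier →ₗ[k] N.carrier) where
  carrier := {f | N.coact ∘ₗ f = f.rTensor Γ ∘ₗ M.coact}
  add_mem' := by
    intro f g hf hg
    simp only [Set.mem_setOf_eq] at *
    rw [LinearMap.comp_add, hf, hg, LinearMap.rTensor_add, LinearMap.add_comp]
  zero_mem' := by simp
  smul_mem' := by
    intro c f hf
    simp only [Set.mem_setOf_eq] at *
    rw [LinearMap.comp_smul, hf, LinearMap.rTensor_smul, LinearMap.smul_comp]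

/-- A comodule is quasifinite if `Hom(F, M)` is finite-dimensional for every
finite-dimensional comodule `F`. -/
def Quasifinite (M : RComod k Γ) : Prop :=
  ∀ F : RComod k Γ, FiniteDimensional k F.carrier →
    FiniteDimensional k ↥(homSubmodule F M)

/-- `0 → A →f B →g C → 0` is an almost split (Auslander–Reiten) sequence. -/
structure IsAlmostSplit {A B C : RComod k Γ} (f : RComodHom A B) (g : RComodHom B C) :
    Prop where
  exact : IsExactSeq f g
  nonsplit : ¬ IsSplitEpi g
  indecA : Indecomposable A
  indecC : Indecomposable C
  lift : ∀ (X : RComod k Γ) (u : RComodHom X C), ¬ IsSplitEpi u →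
    ∃ h : RComodHom X B, g.comp h = u
  extend : ∀ (X : RComod k Γ) (v : RComodHom A X), ¬ IsSplitMono v →
    ∃ h : RComodHom B X, h.comp f = v

/-- `C` is projective in the category of right `Γ`-comodules. -/
def IsProjectiveComod (P : RComod k Γ) : Prop :=
  ∀ (B C : RComod k Γ) (g : RComodHom B C), Function.Surjective g.toFun →
    ∀ u : RComodHom P C, ∃ h : RComodHom P B, g.comp h = u

/-- A subspace of a comodule which is a subcomodule. -/
def IsSubcomodule (M : RComod k Γ) (p : Submodule k M.carrier) : Prop :=
  ∀ x ∈ p, M.coact x ∈ LinearMap.range (p.subtype.rTensor Γ)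

end


noncomputable section

variable {k : Type u} [Field k]

/-- `ι : Λ → Γ` is a morphism of coalgebras. -/
def IsCoalgebraHom {Λ Γ : Type u}
    [AddCommGroup Λ] [Module k Λ] [Coalgebra k Λ]
    [AddCommGroup Γ] [Module k Γ] [Coalgebra k Γ] (ι : Λ →ₗ[k] Γ) : Prop :=
  Coalgebra.comul (R := k) (A := Γ) ∘ₗ ι
      = TensorProduct.map ι ι ∘ₗ Coalgebra.comul (R := k) (A := Λ)
    ∧ Coalgebra.counit (R := k) (A := Γ) ∘ₗ ι = Coalgebra.counit (R := k) (A := Λ)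

/-- A linear map `φ : M → N` from a `Λ`-comodule to a `Γ`-comodule is a comodule map
along a coalgebra morphism `ι : Λ → Γ` if the coactions are intertwined. -/
def IsComodMapAlong {Λ Γ : Type u}
    [AddCommGroup Λ] [Module k Λ] [Coalgebra k Λ]
    [AddCommGroup Γ] [Module k Γ] [Coalgebra k Γ]
    (ι : Λ →ₗ[k] Γ) (M : RComod k Λ) (N : RComod k Γ)
    (φ : M.carrier →ₗ[k] N.carrier) : Prop :=
  N.coact ∘ₗ φ = TensorProduct.map φ ι ∘ₗ M.coact

/-!
If `α i` had a nonzero kernel `K`, the projection `A i → A i ⧸ K` would not be a split mono,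
so by the almost split property of `dᵢ` it extends along `f i`; hence `α i` factors through
`f i`. Subtracting that factorization from `β i` gives a map killing `A i`, which descends to
`C i`, and composing it with `(γ i)⁻¹` yields a section of `g (i + 1)`: impossible, as
`dᵢ₊₁` does not split. Injectivity of `β i` then follows from the four lemma.
-/

section Quotient

variable {Γ : Type u} [AddCommGroup Γ] [Module k Γ] [Coalgebra k Γ]
  {M : RComod k Γ} {p : Submodule k M.carrier}

lemma IsSubcomodule.le_ker_rTensor_mkQ_comp_coact (hp : IsSubcomodule M p) :
    p ≤ LinearMap.ker (p.mkQ.rTensor Γ ∘ₗ M.coact) := by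
  intro x hx
  obtain ⟨y, hy⟩ := hp x hx
  rw [LinearMap.mem_ker, LinearMap.comp_apply, ← hy, ← LinearMap.comp_apply,
    ← LinearMap.rTensor_comp, (LinearMap.exact_subtype_mkQ p).linearMap_comp_eq_zero,
    LinearMap.rTensor_zero, LinearMap.zero_apply]

def IsSubcomodule.quotientCoact (hp : IsSubcomodule M p) :
    M.carrier ⧸ p →ₗ[k] (M.carrier ⧸ p) ⊗[k] Γ :=
  p.liftQ (p.mkQ.rTensor Γ ∘ₗ M.coact) hp.le_ker_rTensor_mkQ_comp_coact

lemma IsSubcomodule.quotientCoact_comp_mkQ (hp : IsSubcomodule M p) :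
    hp.quotientCoact ∘ₗ p.mkQ = p.mkQ.rTensor Γ ∘ₗ M.coact :=
  p.liftQ_mkQ _ _

lemma IsSubcomodule.quotientCoact_coassoc (hp : IsSubcomodule M p) :
    (TensorProduct.assoc k (M.carrier ⧸ p) Γ Γ).toLinearMap ∘ₗ
        hp.quotientCoact.rTensor Γ ∘ₗ hp.quotientCoact
      = (Coalgebra.comul (R := k) (A := Γ)).lTensor _ ∘ₗ hp.quotientCoact := by
  refine Submodule.linearMap_qext _ ?_
  have hassoc : (TensorProduct.assoc k _ Γ Γ).toLinearMap ∘ₗ (p.mkQ.rTensor Γ).rTensor Γ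
      = p.mkQ.rTensor (Γ ⊗[k] Γ) ∘ₗ (TensorProduct.assoc k M.carrier Γ Γ).toLinearMap :=
    TensorProduct.ext_threefold fun _ _ _ => rfl
  calc _ = ((TensorProduct.assoc k _ Γ Γ).toLinearMap ∘ₗ (p.mkQ.rTensor Γ).rTensor Γ)
          ∘ₗ M.coact.rTensor Γ ∘ₗ M.coact := by
        rw [LinearMap.comp_assoc, LinearMap.comp_assoc, hp.quotientCoact_comp_mkQ,
          ← LinearMap.comp_assoc M.coact, ← LinearMap.rTensor_comp, hp.quotientCoact_comp_mkQ,
          LinearMap.rTensor_comp, LinearMap.comp_assoc, LinearMap.comp_assoc]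
    _ = p.mkQ.rTensor (Γ ⊗[k] Γ) ∘ₗ (Coalgebra.comul (R := k) (A := Γ)).lTensor M.carrier
          ∘ₗ M.coact := by
        rw [hassoc, LinearMap.comp_assoc, M.coassoc]
    _ = _ := by
        rw [← LinearMap.comp_assoc, LinearMap.rTensor_comp_lTensor,
          ← LinearMap.lTensor_comp_rTensor, LinearMap.comp_assoc, LinearMap.comp_assoc,
          hp.quotientCoact_comp_mkQ]

lemma IsSubcomodule.quotientCoact_counit (hp : IsSubcomodule M p) :
    (TensorProduct.rid k (M.carrier ⧸ p)).toLinearMap ∘ₗ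
        (Coalgebra.counit (R := k) (A := Γ)).lTensor _ ∘ₗ hp.quotientCoact = LinearMap.id := by
  refine Submodule.linearMap_qext _ ?_
  have hrid : (TensorProduct.rid k (M.carrier ⧸ p)).toLinearMap ∘ₗ p.mkQ.rTensor k
      = p.mkQ ∘ₗ (TensorProduct.rid k M.carrier).toLinearMap :=
    TensorProduct.ext' fun _ _ => by simp
  calc _ = ((TensorProduct.rid k (M.carrier ⧸ p)).toLinearMap ∘ₗ p.mkQ.rTensor k)
          ∘ₗ (Coalgebra.counit (R := k) (A := Γ)).lTensor M.carrier ∘ₗ M.coact := by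
        rw [LinearMap.comp_assoc, LinearMap.comp_assoc, hp.quotientCoact_comp_mkQ,
          ← LinearMap.comp_assoc M.coact, LinearMap.lTensor_comp_rTensor,
          ← LinearMap.rTensor_comp_lTensor, LinearMap.comp_assoc, LinearMap.comp_assoc]
    _ = _ := by rw [hrid, LinearMap.comp_assoc, M.counit_id]; rfl

def RComod.quotient (M : RComod k Γ) (p : Submodule k M.carrier) (hp : IsSubcomodule M p) :
    RComod k Γ where
  carrier := M.carrier ⧸ p
  coact := hp.quotientCoact
  coassoc := hp.quotientCoact_coassoc
  counit_id := hp.quotientCoact_counit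

def RComod.mkQ (M : RComod k Γ) (p : Submodule k M.carrier) (hp : IsSubcomodule M p) :
    RComodHom M (M.quotient p hp) :=
  ⟨p.mkQ, hp.quotientCoact_comp_mkQ⟩

lemma RComod.not_isSplitMono_mkQ (hp : IsSubcomodule M p) (hp0 : p ≠ ⊥) :
    ¬ IsSplitMono (M.mkQ p hp) := by
  rintro ⟨r, hr⟩
  obtain ⟨x, hxp, hx0⟩ := p.ne_bot_iff.mp hp0
  have hrx : r.toFun ((M.mkQ p hp).toFun x) = x := congr($(congrArg RComodHom.toFun hr) x)
  have hx : (M.mkQ p hp).toFun x = 0 := (Submodule.Quotient.mk_eq_zero p).mpr hxp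
  rw [hx, map_zero] at hrx
  exact hx0 hrx.symm

end Quotient

section Along

variable {Λ Γ Θ : Type u} [AddCommGroup Λ] [Module k Λ] [Coalgebra k Λ]
  [AddCommGroup Γ] [Module k Γ] [Coalgebra k Γ] [AddCommGroup Θ] [Module k Θ] [Coalgebra k Θ]

lemma RComodHom.isComodMapAlong_id {M N : RComod k Γ} (φ : RComodHom M N) :
    IsComodMapAlong LinearMap.id M N φ.toFun :=
  φ.comm

lemma IsComodMapAlong.comp {ι₁ : Λ →ₗ[k] Γ} {ι₂ : Γ →ₗ[k] Θ} {M : RComod k Λ}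
    {N : RComod k Γ} {P : RComod k Θ} {φ : M.carrier →ₗ[k] N.carrier}
    {ψ : N.carrier →ₗ[k] P.carrier} (hψ : IsComodMapAlong ι₂ N P ψ)
    (hφ : IsComodMapAlong ι₁ M N φ) : IsComodMapAlong (ι₂ ∘ₗ ι₁) M P (ψ ∘ₗ φ) := by
  unfold IsComodMapAlong at *
  rw [← LinearMap.comp_assoc, hψ, LinearMap.comp_assoc, hφ, ← LinearMap.comp_assoc,
    ← TensorProduct.map_comp]

lemma IsComodMapAlong.of_comp {ι₁ : Λ →ₗ[k] Γ} {ι₂ : Γ →ₗ[k] Θ} {M : RComod k Λ}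
    {N : RComod k Γ} {P : RComod k Θ} {φ : M.carrier →ₗ[k] N.carrier}
    {ψ : N.carrier →ₗ[k] P.carrier} (hφ : IsComodMapAlong ι₁ M N φ)
    (hφs : Function.Surjective φ) (hψφ : IsComodMapAlong (ι₂ ∘ₗ ι₁) M P (ψ ∘ₗ φ)) :
    IsComodMapAlong ι₂ N P ψ := by
  unfold IsComodMapAlong at *
  refine (LinearMap.cancel_right hφs).mp ?_
  rw [LinearMap.comp_assoc, hψφ, LinearMap.comp_assoc, hφ, ← LinearMap.comp_assoc,
    ← TensorProduct.map_comp]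

lemma IsComodMapAlong.sub {ι : Λ →ₗ[k] Γ} {M : RComod k Λ} {N : RComod k Γ}
    {φ ψ : M.carrier →ₗ[k] N.carrier} (hφ : IsComodMapAlong ι M N φ)
    (hψ : IsComodMapAlong ι M N ψ) : IsComodMapAlong ι M N (φ - ψ) := by
  unfold IsComodMapAlong at *
  have hmap : TensorProduct.map (φ - ψ) ι = TensorProduct.map φ ι - TensorProduct.map ψ ι :=
    eq_sub_of_add_eq (by rw [← TensorProduct.map_add_left, sub_add_cancel])
  rw [LinearMap.comp_sub, hφ, hψ, hmap, LinearMap.sub_comp]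

/-- Over a field `1 ⊗ ι` is injective, so `ρ(ker φ)` is killed by `φ ⊗ 1`. -/
lemma IsComodMapAlong.isSubcomodule_ker {ι : Λ →ₗ[k] Γ} (hι : Function.Injective ι)
    {M : RComod k Λ} {N : RComod k Γ} {φ : M.carrier →ₗ[k] N.carrier}
    (hφ : IsComodMapAlong ι M N φ) : IsSubcomodule M (LinearMap.ker φ) := by
  intro x hx
  have hzero : φ.rTensor Λ (M.coact x) = 0 := by
    apply Module.Flat.lTensor_preserves_injective_linearMap (M := N.carrier) ι hι
    rw [← LinearMap.comp_apply, LinearMap.lTensor_comp_rTensor, ← LinearMap.comp_apply, ← hφ,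
      LinearMap.comp_apply, LinearMap.mem_ker.mp hx, map_zero, map_zero]
  exact (Module.Flat.rTensor_exact Λ (LinearMap.exact_subtype_ker_map φ) _).mp hzero

end Along

section Sequences

variable {Λ Γ : Type u} [AddCommGroup Λ] [Module k Λ] [Coalgebra k Λ]
  [AddCommGroup Γ] [Module k Γ] [Coalgebra k Γ] {ι : Λ →ₗ[k] Γ}
  {A B C : RComod k Λ} {f : RComodHom A B} {g : RComodHom B C}
  {A' B' C' : RComod k Γ} {f' : RComodHom A' B'} {g' : RComodHom B' C'}

lemma IsExactSeq.function_exact (hd : IsExactSeq f g) : Function.Exact f.toFun g.toFun :=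
  LinearMap.exact_iff.mpr hd.exact.symm

lemma IsExactSeq.comp_eq_zero (hd : IsExactSeq f g) : g.toFun ∘ₗ f.toFun = 0 :=
  hd.function_exact.linearMap_comp_eq_zero

lemma IsExactSeq.injective_of_injective (hd : IsExactSeq f g) (hf' : Function.Injective f'.toFun)
    {α : A.carrier →ₗ[k] A'.carrier} {β : B.carrier →ₗ[k] B'.carrier}
    {γ : C.carrier →ₗ[k] C'.carrier} (hcomm1 : β ∘ₗ f.toFun = f'.toFun ∘ₗ α)
    (hcomm2 : γ ∘ₗ g.toFun = g'.toFun ∘ₗ β) (hα : Function.Injective α)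
    (hγ : Function.Injective γ) : Function.Injective β :=
  LinearMap.injective_of_surjective_of_injective_of_injective (0 : Unit →ₗ[k] A.carrier)
    f.toFun g.toFun (0 : Unit →ₗ[k] A'.carrier) f'.toFun g'.toFun 0 α β γ (by simp)
    hcomm1.symm hcomm2.symm ((LinearMap.exact_zero_iff_injective _ _).mpr hd.inj)
    hd.function_exact ((LinearMap.exact_zero_iff_injective _ _).mpr hf') (fun _ => ⟨0, rfl⟩)
    hα hγ

lemma IsExactSeq.exists_comp_eq_of_comp_eq_zero (hd : IsExactSeq f g) {N : RComod k Γ}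
    {δ : B.carrier →ₗ[k] N.carrier} (hδ : IsComodMapAlong ι B N δ) (hδf : δ ∘ₗ f.toFun = 0) :
    ∃ τ : C.carrier →ₗ[k] N.carrier, IsComodMapAlong ι C N τ ∧ τ ∘ₗ g.toFun = δ := by
  set τ := (LinearMap.range f.toFun).liftQ δ (LinearMap.range_le_ker_iff.mpr hδf) ∘ₗ
    (hd.function_exact.linearEquivOfSurjective hd.surj).symm.toLinearMap
  have hτg : τ ∘ₗ g.toFun = δ := LinearMap.ext fun b => by simp [τ]
  refine ⟨τ, g.isComodMapAlong_id.of_comp hd.surj ?_, hτg⟩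
  rwa [hτg, LinearMap.comp_id]

lemma RComodHom.isSplitEpi_of_comp_eq (g' : RComodHom B' C') {γ : C.carrier →ₗ[k] C'.carrier}
    (hγ : IsComodMapAlong ι C C' γ) (hγbij : Function.Bijective γ) {τ : C.carrier →ₗ[k] B'.carrier}
    (hτ : IsComodMapAlong ι C B' τ) (hτg : g'.toFun ∘ₗ τ = γ) : IsSplitEpi g' := by
  set e := LinearEquiv.ofBijective γ hγbij
  have hσγ : (τ ∘ₗ e.symm.toLinearMap) ∘ₗ γ = τ := LinearMap.ext fun c => by simp [e]
  have hσ : IsComodMapAlong LinearMap.id C' B' (τ ∘ₗ e.symm.toLinearMap) :=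
    hγ.of_comp hγbij.2 (by rwa [hσγ, LinearMap.id_comp])
  refine ⟨⟨τ ∘ₗ e.symm.toLinearMap, hσ⟩, RComodHom.ext ?_⟩
  change g'.toFun ∘ₗ τ ∘ₗ e.symm.toLinearMap = LinearMap.id
  rw [← LinearMap.comp_assoc, hτg]
  exact LinearMap.ext fun c => e.apply_symm_apply c

/-- Via `γ`, `d'` is the pushout of `d` along `α`, and a pushout along a map factoring through
`f` splits. -/
lemma IsExactSeq.isSplitEpi_of_comp_eq (hd : IsExactSeq f g)
    (hg'f' : g'.toFun ∘ₗ f'.toFun = 0) {α : A.carrier →ₗ[k] A'.carrier}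
    {β : B.carrier →ₗ[k] B'.carrier} {γ : C.carrier →ₗ[k] C'.carrier}
    (hβ : IsComodMapAlong ι B B' β) (hγ : IsComodMapAlong ι C C' γ)
    (hγbij : Function.Bijective γ) (hcomm1 : β ∘ₗ f.toFun = f'.toFun ∘ₗ α)
    (hcomm2 : γ ∘ₗ g.toFun = g'.toFun ∘ₗ β) {ψ : B.carrier →ₗ[k] A'.carrier}
    (hψ : IsComodMapAlong ι B A' ψ) (hψf : ψ ∘ₗ f.toFun = α) : IsSplitEpi g' := by
  set δ := β - f'.toFun ∘ₗ ψ
  have hδ : IsComodMapAlong ι B B' δ :=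
    hβ.sub (by simpa using f'.isComodMapAlong_id.comp hψ)
  have hδf : δ ∘ₗ f.toFun = 0 := by
    rw [LinearMap.sub_comp, LinearMap.comp_assoc, hψf, hcomm1, sub_self]
  obtain ⟨τ, hτ, hτg⟩ := hd.exists_comp_eq_of_comp_eq_zero hδ hδf
  refine g'.isSplitEpi_of_comp_eq hγ hγbij hτ ((LinearMap.cancel_right hd.surj).mp ?_)
  rw [LinearMap.comp_assoc, hτg, LinearMap.comp_sub, ← LinearMap.comp_assoc, hg'f',
    LinearMap.zero_comp, sub_zero, hcomm2]

lemma IsAlmostSplit.exists_comp_eq_of_ker_ne_bot (hd : IsAlmostSplit f g)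
    (hι : Function.Injective ι) {N : RComod k Γ} {φ : A.carrier →ₗ[k] N.carrier}
    (hφ : IsComodMapAlong ι A N φ) (hker : LinearMap.ker φ ≠ ⊥) :
    ∃ ψ : B.carrier →ₗ[k] N.carrier, IsComodMapAlong ι B N ψ ∧ ψ ∘ₗ f.toFun = φ := by
  have hK := hφ.isSubcomodule_ker hι
  obtain ⟨h, hhf⟩ := hd.extend _ (A.mkQ _ hK) (A.not_isSplitMono_mkQ hK hker)
  set φbar : (A.quotient _ hK).carrier →ₗ[k] N.carrier := (LinearMap.ker φ).liftQ φ le_rfl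
  have hφbar_mkQ : φbar ∘ₗ (A.mkQ _ hK).toFun = φ := Submodule.liftQ_mkQ _ _ _
  have hφbar : IsComodMapAlong ι (A.quotient _ hK) N φbar :=
    (A.mkQ _ hK).isComodMapAlong_id.of_comp (LinearMap.ker φ).mkQ_surjective
      (by rwa [LinearMap.comp_id, hφbar_mkQ])
  refine ⟨φbar ∘ₗ h.toFun, by simpa using hφbar.comp h.isComodMapAlong_id, ?_⟩
  change φbar ∘ₗ (h.comp f).toFun = φ
  rwa [hhf]

lemma IsAlmostSplit.injective_of_not_isSplitEpi (hd : IsAlmostSplit f g)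
    (hι : Function.Injective ι) (hg'f' : g'.toFun ∘ₗ f'.toFun = 0) (hg' : ¬ IsSplitEpi g')
    {α : A.carrier →ₗ[k] A'.carrier} {β : B.carrier →ₗ[k] B'.carrier}
    {γ : C.carrier →ₗ[k] C'.carrier} (hα : IsComodMapAlong ι A A' α)
    (hβ : IsComodMapAlong ι B B' β) (hγ : IsComodMapAlong ι C C' γ)
    (hγbij : Function.Bijective γ) (hcomm1 : β ∘ₗ f.toFun = f'.toFun ∘ₗ α)
    (hcomm2 : γ ∘ₗ g.toFun = g'.toFun ∘ₗ β) : Function.Injective α := by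
  by_contra hαinj
  obtain ⟨ψ, hψ, hψf⟩ :=
    hd.exists_comp_eq_of_ker_ne_bot hι hα (mt LinearMap.ker_eq_bot.mp hαinj)
  exact hg' (hd.exact.isSplitEpi_of_comp_eq hg'f' hβ hγ hγbij hcomm1 hcomm2 hψ hψf)

end Sequences

theorem connecting_maps_of_almost_split_system_injective_general
    (G : ℕ → Type u) [∀ i, AddCommGroup (G i)] [∀ i, Module k (G i)]
    [∀ i, Coalgebra k (G i)]
    (ι : ∀ i, G i →ₗ[k] G (i + 1))
    (hιinj : ∀ i, Function.Injective (ι i))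
    (A B C : ∀ i, RComod k (G i))
    (f : ∀ i, RComodHom (A i) (B i)) (g : ∀ i, RComodHom (B i) (C i))
    (halm : ∀ i, IsAlmostSplit (f i) (g i))
    (α : ∀ i, (A i).carrier →ₗ[k] (A (i + 1)).carrier)
    (β : ∀ i, (B i).carrier →ₗ[k] (B (i + 1)).carrier)
    (γ : ∀ i, (C i).carrier →ₗ[k] (C (i + 1)).carrier)
    (hα : ∀ i, IsComodMapAlong (k := k) (ι i) (A i) (A (i + 1)) (α i))
    (hβ : ∀ i, IsComodMapAlong (k := k) (ι i) (B i) (B (i + 1)) (β i))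
    (hγ : ∀ i, IsComodMapAlong (k := k) (ι i) (C i) (C (i + 1)) (γ i))
    (hγbij : ∀ i, Function.Bijective (γ i))
    (hcomm1 : ∀ i, β i ∘ₗ (f i).toFun = (f (i + 1)).toFun ∘ₗ α i)
    (hcomm2 : ∀ i, γ i ∘ₗ (g i).toFun = (g (i + 1)).toFun ∘ₗ β i) :
    ∀ i, Function.Injective (α i) ∧ Function.Injective (β i) := by
  intro i
  have hαinj : Function.Injective (α i) :=
    (halm i).injective_of_not_isSplitEpi (hιinj i) (halm (i + 1)).exact.comp_eq_zero
      (halm (i + 1)).nonsplit (hα i) (hβ i) (hγ i) (hγbij i) (hcomm1 i) (hcomm2 i)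
  exact ⟨hαinj, (halm i).exact.injective_of_injective (halm (i + 1)).exact.inj (hcomm1 i)
    (hcomm2 i) hαinj (hγbij i).1⟩

/-- Let `Γ = ∪ Γᵢ` be an ascending chain of finite-dimensional
subcoalgebras (given as coalgebras `G i` with injective coalgebra morphisms
`ι i : G i → G (i+1)`), let `C` be a finite-dimensional comodule (appearing as the
common right-hand term `C i` of all the sequences, the connecting maps `γ i` being
bijective, "the identity on C"), and let
`dᵢ : 0 → A i → B i → C i → 0` be almost split sequences in the categories of right
`G i`-comodules, connected by morphisms of sequences `(α i, β i, γ i)` along `ι i`.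
Then the connecting maps `α i : A i → A (i+1)` and `β i : B i → B (i+1)` are
injective. -/
theorem connecting_maps_of_almost_split_system_injective
    (G : ℕ → Type u) [∀ i, AddCommGroup (G i)] [∀ i, Module k (G i)]
    [∀ i, Coalgebra k (G i)] [∀ i, FiniteDimensional k (G i)]
    (ι : ∀ i, G i →ₗ[k] G (i + 1))
    (hιinj : ∀ i, Function.Injective (ι i))
    (hι : ∀ i, IsCoalgebraHom (k := k) (ι i))
    (A B C : ∀ i, RComod k (G i))
    (f : ∀ i, RComodHom (A i) (B i)) (g : ∀ i, RComodHom (B i) (C i))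
    (halm : ∀ i, IsAlmostSplit (f i) (g i))
    (hCfd : ∀ i, FiniteDimensional k (C i).carrier)
    (α : ∀ i, (A i).carrier →ₗ[k] (A (i + 1)).carrier)
    (β : ∀ i, (B i).carrier →ₗ[k] (B (i + 1)).carrier)
    (γ : ∀ i, (C i).carrier →ₗ[k] (C (i + 1)).carrier)
    (hα : ∀ i, IsComodMapAlong (k := k) (ι i) (A i) (A (i + 1)) (α i))
    (hβ : ∀ i, IsComodMapAlong (k := k) (ι i) (B i) (B (i + 1)) (β i))
    (hγ : ∀ i, IsComodMapAlong (k := k) (ι i) (C i) (C (i + 1)) (γ i))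
    (hγbij : ∀ i, Function.Bijective (γ i))
    (hcomm1 : ∀ i, β i ∘ₗ (f i).toFun = (f (i + 1)).toFun ∘ₗ α i)
    (hcomm2 : ∀ i, γ i ∘ₗ (g i).toFun = (g (i + 1)).toFun ∘ₗ β i) :
    ∀ i, Function.Injective (α i) ∧ Function.Injective (β i) :=
  connecting_maps_of_almost_split_system_injective_general G ι hιinj A B C f g halm α β γ hα hβ hγ
    hγbij hcomm1 hcomm2

end
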